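/- arXiv:1004.4413 — 6 statements merged into one kernel-verified Lean document; each statement's English description precedes it below -/
import Mathlib

section
/- For 0 < β ≤ 1 and every t > 0, the derivative of t ↦ E_β(-t^β) equals -t^{β-1} E_{β,β}(-t^β); that is, d/dt E_β(-t^β) = - t^{β-1} E_{β,β}(-t^β). -/
open MeasureTheory Real Filter Set

lemma gamma_step (β x : ℝ) (hβ0 : 0 < β) (hβ1 : β ≤ 1) (hx : 1 ≤ x) :
    x * Real.Gamma x ≤ (x + β) ^ (1 - β) * Real.Gamma (x + β) := by
  have hx0 : 0 < x := lt_of_lt_of_le one_pos hx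
  have hxβ : 0 < x + β := by linarith
  have hΓβ : 0 < Real.Gamma (x + β) := Real.Gamma_pos_of_pos hxβ
  have hΓβ1 : 0 < Real.Gamma (x + β + 1) := Real.Gamma_pos_of_pos (by linarith)
  have hΓx1 : 0 < Real.Gamma (x + 1) := Real.Gamma_pos_of_pos (by linarith)
  have hc := Real.convexOn_log_Gamma.2 (mem_Ioi.mpr hxβ)
      (mem_Ioi.mpr (show (0:ℝ) < x + β + 1 by linarith)) hβ0.le (by linarith : (0:ℝ) ≤ 1 - β)
      (by ring)
  have hpt : β • (x + β) + (1 - β) • (x + β + 1) = x + 1 := by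
    simp only [smul_eq_mul]; ring
  rw [hpt] at hc
  simp only [Function.comp, smul_eq_mul] at hc
  have h1 : Real.Gamma (x + 1) ≤ Real.Gamma (x+β) ^ (β:ℝ) * Real.Gamma (x+β+1) ^ ((1-β):ℝ) := by
    rw [Real.rpow_def_of_pos hΓβ, Real.rpow_def_of_pos hΓβ1, mul_comm (Real.log _) β,
      mul_comm (Real.log _) (1-β), ← Real.exp_add]
    calc Real.Gamma (x+1) = Real.exp (Real.log (Real.Gamma (x+1))) := (Real.exp_log hΓx1).symm
      _ ≤ _ := Real.exp_le_exp.mpr hc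
  rw [Real.Gamma_add_one (ne_of_gt hxβ), Real.mul_rpow hxβ.le hΓβ.le] at h1
  calc x * Real.Gamma x = Real.Gamma (x + 1) := (Real.Gamma_add_one (ne_of_gt hx0)).symm
    _ ≤ Real.Gamma (x+β) ^ (β:ℝ) * ((x+β) ^ ((1-β):ℝ) * Real.Gamma (x+β) ^ ((1-β):ℝ)) := h1
    _ = (x + β) ^ (1 - β) * Real.Gamma (x + β) := by
        rw [mul_comm (Real.Gamma (x+β) ^ (β:ℝ)), mul_assoc, ← Real.rpow_add hΓβ]
        norm_num

lemma summable_aux (β R : ℝ) (hβ0 : 0 < β) (hβ1 : β ≤ 1) (hR : 1 ≤ R) :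
    Summable (fun n : ℕ => n * R ^ n / Real.Gamma (1 + β * n)) := by
  have hR0 : 0 < R := lt_of_lt_of_le one_pos hR
  apply summable_of_ratio_norm_eventually_le (r := 1/2) (by norm_num)
  have htend : Tendsto (fun n : ℕ => (1 + β * n + β) ^ β) atTop atTop := by
    apply (tendsto_rpow_atTop hβ0).comp
    apply tendsto_atTop_add_const_right
    apply tendsto_atTop_add_const_left
    exact tendsto_natCast_atTop_atTop.const_mul_atTop hβ0
  filter_upwards [htend.eventually_ge_atTop (8 * R), eventually_ge_atTop 1] with n hpow hn1
  have hN1 : (1:ℝ) ≤ n := by exact_mod_cast hn1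
  set x : ℝ := 1 + β * n with hxdef
  have hx1 : 1 ≤ x := by nlinarith
  have hxβ : 0 < x + β := by linarith
  have hΓx : 0 < Real.Gamma x := Real.Gamma_pos_of_pos (by linarith)
  have hΓxβ : 0 < Real.Gamma (x + β) := Real.Gamma_pos_of_pos hxβ
  have hcast : (1:ℝ) + β * (↑(n+1):ℝ) = x + β := by push_cast; ring
  have hΓpos : 0 < Real.Gamma (1 + β * (↑(n+1):ℝ)) := by rw [hcast]; exact hΓxβ
  have hnn : (0:ℝ) ≤ (n:ℝ) * R ^ n / Real.Gamma x := by positivity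
  have hnn1 : (0:ℝ) ≤ (↑(n+1):ℝ) * R ^ (n+1) / Real.Gamma (1 + β * (↑(n+1):ℝ)) := by positivity
  rw [Real.norm_of_nonneg hnn1, Real.norm_of_nonneg hnn, hcast, mul_comm (1/2:ℝ),
    div_mul_eq_mul_div, div_le_div_iff₀ hΓxβ hΓx]
  set P : ℝ := (x + β) ^ (1 - β) with hPdef
  have hP : 0 < P := Real.rpow_pos_of_pos hxβ _
  have hPle : P ≤ (x + β) / (8 * R) := by
    have h0 : P = (x + β) / (x + β) ^ β := by
      rw [hPdef, Real.rpow_sub hxβ, Real.rpow_one]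
    rw [h0]
    gcongr
  have key : 2 * (↑(n+1):ℝ) * R * P ≤ (n:ℝ) * x := by
    have h1 : 2 * (↑(n+1):ℝ) * R * P ≤ 2 * (↑(n+1):ℝ) * R * ((x + β) / (8 * R)) := by
      gcongr
    have h2 : 2 * (↑(n+1):ℝ) * R * ((x + β) / (8 * R)) = (↑(n+1):ℝ) * (x + β) / 4 := by
      field_simp; ring
    push_cast at h1 h2 ⊢
    nlinarith [hN1, hx1, hβ1, hβ0]
  have hG := gamma_step β x hβ0 hβ1 hx1
  have h1 : (2 * (↑(n+1):ℝ) * R * P) * (R ^ n * Real.Gamma x)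
      ≤ ((n:ℝ) * x) * (R ^ n * Real.Gamma x) :=
    mul_le_mul_of_nonneg_right key (by positivity)
  have h2 : (x * Real.Gamma x) * ((n:ℝ) * R ^ n)
      ≤ (P * Real.Gamma (x + β)) * ((n:ℝ) * R ^ n) :=
    mul_le_mul_of_nonneg_right hG (by positivity)
  have goal' : (↑(n+1):ℝ) * R ^ (n+1) * Real.Gamma x * P
      ≤ (n:ℝ) * R ^ n * (1/2) * Real.Gamma (x + β) * P := by
    rw [pow_succ]
    push_cast at h1 ⊢
    nlinarith [h1, h2]
  exact le_of_mul_le_mul_right goal' hP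

/-- The (one-parameter) Mittag-Leffler function `E_β(z) = Σ zⁿ / Γ(1 + βn)`. -/
noncomputable def mittagLeffler (β z : ℝ) : ℝ :=
  ∑' n : ℕ, z ^ n / Real.Gamma (1 + β * n)

/-- The two-parameter Mittag-Leffler function `E_{β,β}(z) = Σ zⁿ / Γ(β + βn)`. -/
noncomputable def mittagLeffler2 (β z : ℝ) : ℝ :=
  ∑' n : ℕ, z ^ n / Real.Gamma (β + β * n)

theorem deriv_mittagLeffler_survival
    (β t : ℝ) (hβ0 : 0 < β) (hβ1 : β ≤ 1) (ht : 0 < t) :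
    HasDerivAt (fun t : ℝ => mittagLeffler β (-(t ^ β)))
      (-(t ^ (β - 1) * mittagLeffler2 β (-(t ^ β)))) t := by
  have hβ : β ≠ 0 := ne_of_gt hβ0
  have hΓ : ∀ n : ℕ, 0 < Real.Gamma (1 + β * n) := fun n =>
    Real.Gamma_pos_of_pos (by have := mul_nonneg hβ0.le (Nat.cast_nonneg n); linarith)
  set X : ℝ := t ^ β with hXdef
  have hX0 : 0 < X := Real.rpow_pos_of_pos ht β
  set R : ℝ := |X| + 1 with hRdef
  have hR1 : (1:ℝ) ≤ R := by have := abs_nonneg X; linarith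
  have hR0 : (0:ℝ) < R := lt_of_lt_of_le one_pos hR1
  have hu : Summable (fun n : ℕ => n * R ^ n / Real.Gamma (1 + β * n)) :=
    summable_aux β R hβ0 hβ1 hR1
  set f : ℕ → ℝ → ℝ := fun n y => (-1:ℝ) ^ n * y ^ n / Real.Gamma (1 + β * n) with hfdef
  set f' : ℕ → ℝ → ℝ := fun n y => (-1:ℝ) ^ n * (n * y ^ (n-1)) / Real.Gamma (1 + β * n)
    with hf'def
  have hderiv : ∀ (n : ℕ) (y : ℝ), y ∈ Metric.ball (0:ℝ) R → HasDerivAt (f n) (f' n y) y :=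
    fun n y _ => ((hasDerivAt_pow n y).const_mul ((-1:ℝ)^n)).div_const _
  have hbound : ∀ (n : ℕ) (y : ℝ), y ∈ Metric.ball (0:ℝ) R →
      ‖f' n y‖ ≤ n * R ^ n / Real.Gamma (1 + β * n) := by
    intro n y hy
    rw [Metric.mem_ball, dist_zero_right, Real.norm_eq_abs] at hy
    have h1 : ‖f' n y‖ = n * |y| ^ (n-1) / Real.Gamma (1 + β * n) := by
      simp [hf'def, abs_div, abs_mul, abs_pow, abs_of_pos (hΓ n)]
    rw [h1]
    gcongr
    calc |y| ^ (n-1) ≤ R ^ (n-1) := pow_le_pow_left₀ (abs_nonneg y) hy.le _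
      _ ≤ R ^ n := pow_le_pow_right₀ hR1 (Nat.sub_le n 1)
  have hf0 : Summable (fun n => f n 0) := by
    apply summable_of_ne_finset_zero (s := {0})
    intro n hn
    have : n ≠ 0 := by simpa using hn
    simp [hfdef, zero_pow this]
  have hXmem : X ∈ Metric.ball (0:ℝ) R := by
    rw [Metric.mem_ball, dist_zero_right, Real.norm_eq_abs]; linarith
  have h0mem : (0:ℝ) ∈ Metric.ball (0:ℝ) R := by
    rw [Metric.mem_ball, dist_self]; linarith
  have htsum : HasDerivAt (fun y => ∑' n, f n y) (∑' n, f' n X) X :=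
    hasDerivAt_tsum_of_isPreconnected hu Metric.isOpen_ball
      (convex_ball (0:ℝ) R).isPreconnected hderiv hbound h0mem hf0 hXmem
  have hrpow : HasDerivAt (fun s : ℝ => s ^ β) (β * t ^ (β - 1)) t :=
    Real.hasDerivAt_rpow_const (Or.inl (ne_of_gt ht))
  have hcomp := HasDerivAt.comp t htsum hrpow
  -- identify the function
  have hfun : (fun s : ℝ => mittagLeffler β (-(s ^ β))) =
      (fun y => ∑' n, f n y) ∘ (fun s : ℝ => s ^ β) := by
    funext s
    simp only [Function.comp, mittagLeffler, hfdef]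
    exact tsum_congr fun n => by rw [neg_pow]
  -- identify the derivative
  have hsum' : Summable (fun n => f' n X) :=
    hu.of_norm_bounded (fun n => hbound n X hXmem)
  have hterm : ∀ m : ℕ, f' (m+1) X = (-(1/β)) * ((-X) ^ m / Real.Gamma (β + β * m)) := by
    intro m
    have hβm : (0:ℝ) < β + β * m := by
      have := mul_nonneg hβ0.le (Nat.cast_nonneg m); linarith
    have h2 : Real.Gamma ((β + β * m) + 1) = (β + β * m) * Real.Gamma (β + β * m) :=
      Real.Gamma_add_one (ne_of_gt hβm)
    have hΓm : Real.Gamma (β + β * m) ≠ 0 := ne_of_gt (Real.Gamma_pos_of_pos hβm)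
    simp only [hf'def, Nat.add_sub_cancel, Nat.cast_add, Nat.cast_one]
    rw [show (1:ℝ) + β * ((m:ℝ) + 1) = (β + β * m) + 1 by ring, h2, neg_pow X m]
    field_simp
    ring
  have hder : (∑' n, f' n X) = -(1/β) * mittagLeffler2 β (-X) := by
    rw [Summable.tsum_eq_zero_add hsum']
    have h0 : f' 0 X = 0 := by simp [hf'def]
    rw [h0, zero_add]
    simp only [hterm]
    rw [tsum_mul_left, mittagLeffler2]
  rw [hfun]
  convert hcomp using 1
  case e'_4 => rfl
  case e'_5 => rfl
  rw [hder]
  field_simp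
end

section
/- Lemma 2, case (B): Let ν be a probability measure on [0,∞), let 0 < β < 1 and c > 0, and assume the survival function has the tail asymptotics ν((t,∞)) ~ c β^{-1} t^{-β} as t → ∞, i.e. lim_{t→∞} t^β ν((t,∞)) = c/β. Then, with λ = cπ / (Γ(β+1) sin(βπ)), the Laplace transform φ̃(s) = ∫ e^{-st} dν(t) satisfies lim_{s→0+} (1 - φ̃(s)) / s^β = λ. -/
open MeasureTheory Real Filter Set Topology

set_option maxHeartbeats 1600000 in
theorem laplace_transform_asymptotics_power_law_tail
    (ν : Measure ℝ) [IsProbabilityMeasure ν]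
    (hsupp : ν (Set.Iio 0) = 0)
    (β c : ℝ) (hβ0 : 0 < β) (hβ1 : β < 1) (hc : 0 < c)
    (htail : Tendsto (fun t : ℝ => t ^ β * (ν (Set.Ioi t)).toReal) atTop (𝓝 (c / β))) :
    Tendsto (fun s : ℝ => (1 - ∫ t, Real.exp (-(s * t)) ∂ν) / s ^ β)
      (𝓝[>] (0:ℝ)) (𝓝 (c * π / (Real.Gamma (β + 1) * Real.sin (β * π)))) := by
  set G : ℝ → ℝ := fun u => (ν (Set.Ioi u)).toReal with hGdef
  have hmG : Measurable G :=
    Measurable.ennreal_toReal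
      (Antitone.measurable (fun u v huv => measure_mono (Ioi_subset_Ioi huv)))
  have hG0 : ∀ u, 0 ≤ G u := fun u => ENNReal.toReal_nonneg
  have hG1 : ∀ u, G u ≤ 1 := by
    intro u
    have h1 : (ν (Set.Ioi u)).toReal ≤ (ν Set.univ).toReal :=
      ENNReal.toReal_mono (measure_ne_top ν _) (measure_mono (subset_univ _))
    simpa [measure_univ] using h1
  have hae : ∀ᵐ t ∂ν, 0 ≤ t := by
    rw [ae_iff]
    have : {t : ℝ | ¬ 0 ≤ t} = Set.Iio 0 := by ext t; simp [not_le]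
    rw [this]; exact hsupp
  -- bound on ψ t = t^β * G t for t ≥ 0
  obtain ⟨A, hA⟩ : ∃ A : ℝ, ∀ t ≥ A, t ^ β * G t ≤ c / β + 1 := by
    have := htail.eventually (eventually_le_nhds (lt_add_one (c / β)))
    exact eventually_atTop.mp this
  set M : ℝ := max ((max A 1) ^ β) (c / β + 1) with hMdef
  have hM : ∀ t : ℝ, 0 ≤ t → t ^ β * G t ≤ M := by
    intro t ht
    rcases le_or_gt A t with h | h
    · exact (hA t h).trans (le_max_right _ _)
    · have ht1 : t ≤ max A 1 := le_trans h.le (le_max_left _ _)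
      have : t ^ β * G t ≤ t ^ β := by
        nlinarith [Real.rpow_nonneg ht β, hG1 t, hG0 t]
      refine this.trans (le_trans ?_ (le_max_left _ _))
      exact Real.rpow_le_rpow ht ht1 hβ0.le
  -- Step 1: layer cake
  have key : ∀ s : ℝ, 0 < s →
      1 - ∫ t, Real.exp (-(s * t)) ∂ν
        = ∫ u in Set.Ioi (0:ℝ), s * Real.exp (-(s * u)) * G u := by
    intro s hs
    have hint : Integrable (fun t => Real.exp (-(s * t))) ν := by
      refine Integrable.mono' (integrable_const 1) ?_ ?_
      · exact (Real.continuous_exp.comp (by continuity)).aestronglyMeasurable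
      · filter_upwards [hae] with t ht
        rw [Real.norm_eq_abs, abs_of_pos (Real.exp_pos _)]
        exact Real.exp_le_one_iff.mpr (by nlinarith)
    have h1 : 1 - ∫ t, Real.exp (-(s * t)) ∂ν = ∫ t, (1 - Real.exp (-(s * t))) ∂ν := by
      rw [integral_sub (integrable_const 1) hint, integral_const]
      simp [measure_univ]
    have hii : ∀ ω : ℝ, (∫ t in (0:ℝ)..ω, s * Real.exp (-(s * t))) = 1 - Real.exp (-(s * ω)) := by
      intro ω
      have h2 : ∀ t : ℝ, -(s * t) = (-s) * t := fun t => by ring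
      simp_rw [h2]
      rw [intervalIntegral.integral_const_mul,
        intervalIntegral.integral_comp_mul_left Real.exp (by linarith : (-s) ≠ 0),
        integral_exp]
      simp only [mul_zero, neg_mul, smul_eq_mul, Real.exp_zero]
      rw [mul_comm, inv_mul_eq_div, div_mul_eq_mul_div, eq_comm,
        eq_div_iff (by linarith : (-s) ≠ 0)]
      ring
    have lc := lintegral_comp_eq_lintegral_meas_lt_mul ν (f := fun t : ℝ => t)
        (g := fun t => s * Real.exp (-(s * t))) hae aemeasurable_id
        (fun t _ => Continuous.intervalIntegrable (by continuity) 0 t)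
        (Eventually.of_forall fun t => by positivity)
    simp_rw [hii] at lc
    have e1 : ∫ t, (1 - Real.exp (-(s * t))) ∂ν
        = (∫⁻ ω, ENNReal.ofReal (1 - Real.exp (-(s * ω))) ∂ν).toReal := by
      refine integral_eq_lintegral_of_nonneg_ae ?_ ?_
      · filter_upwards [hae] with t ht
        have h3 : Real.exp (-(s * t)) ≤ 1 := Real.exp_le_one_iff.mpr (by nlinarith)
        show (0:ℝ) ≤ 1 - Real.exp (-(s * t))
        linarith
      · exact (continuous_const.sub (Real.continuous_exp.comp (by continuity))).aestronglyMeasurable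
    have e2 : ∫ u in Set.Ioi (0:ℝ), s * Real.exp (-(s * u)) * G u
        = (∫⁻ t in Set.Ioi (0:ℝ), ENNReal.ofReal (s * Real.exp (-(s * t)) * G t)).toReal := by
      refine integral_eq_lintegral_of_nonneg_ae ?_ ?_
      · refine Eventually.of_forall fun t => ?_
        show (0:ℝ) ≤ s * Real.exp (-(s * t)) * G t
        have := hG0 t
        positivity
      · exact ((measurable_const.mul
          (Real.measurable_exp.comp ((measurable_const.mul measurable_id).neg))).mul
          hmG).aestronglyMeasurable
    rw [h1, e1, e2]
    congr 1
    rw [lc]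
    refine lintegral_congr fun t => ?_
    have : ENNReal.ofReal (s * Real.exp (-(s * t)) * G t)
        = ENNReal.ofReal (s * Real.exp (-(s * t))) * ν (Set.Ioi t) := by
      rw [ENNReal.ofReal_mul (by positivity), hGdef,
        ENNReal.ofReal_toReal (measure_ne_top ν _)]
    rw [this, mul_comm]
    rfl
  -- Step 2: change of variables
  have key2 : ∀ s : ℝ, 0 < s →
      (1 - ∫ t, Real.exp (-(s * t)) ∂ν) / s ^ β
        = ∫ x in Set.Ioi (0:ℝ),
            Real.exp (-x) * x ^ (-β) * ((x / s) ^ β * G (x / s)) := by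
    intro s hs
    rw [key s hs]
    have hconst : ∀ u : ℝ, s * Real.exp (-(s * u)) * G u = s * (Real.exp (-(s * u)) * G u) :=
      fun u => by ring
    simp_rw [hconst]
    rw [integral_const_mul]
    have cv : (∫ u in Set.Ioi (0:ℝ), Real.exp (-(s * u)) * G u)
        = s⁻¹ * ∫ x in Set.Ioi (0:ℝ), Real.exp (-x) * G (x / s) := by
      have h := integral_comp_mul_left_Ioi (fun y => Real.exp (-y) * G (y / s)) 0 hs
      simp only [mul_zero, smul_eq_mul] at h
      rw [← h]
      refine setIntegral_congr_fun measurableSet_Ioi fun x _ => ?_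
      rw [mul_div_cancel_left₀ _ hs.ne']
    rw [cv, mul_inv_cancel_left₀ hs.ne']
    have hrw : ∀ x ∈ Set.Ioi (0:ℝ),
        Real.exp (-x) * x ^ (-β) * ((x / s) ^ β * G (x / s))
          = (s ^ β)⁻¹ * (Real.exp (-x) * G (x / s)) := by
      intro x hx
      have hx0 : (0:ℝ) < x := hx
      have h1 : (x / s) ^ β = x ^ β / s ^ β := Real.div_rpow hx0.le hs.le β
      have h2 : x ^ (-β) = (x ^ β)⁻¹ := Real.rpow_neg hx0.le β
      have h3 : x ^ β ≠ 0 := (Real.rpow_pos_of_pos hx0 β).ne'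
      rw [h1, h2]
      field_simp
    rw [setIntegral_congr_fun measurableSet_Ioi hrw, integral_const_mul, div_eq_mul_inv,
      mul_comm]
  -- Step 3: dominated convergence
  have hlim : Tendsto
      (fun s : ℝ => ∫ x in Set.Ioi (0:ℝ),
          Real.exp (-x) * x ^ (-β) * ((x / s) ^ β * G (x / s)))
      (𝓝[>] (0:ℝ))
      (𝓝 (∫ x in Set.Ioi (0:ℝ), Real.exp (-x) * x ^ (-β) * (c / β))) := by
    refine tendsto_integral_filter_of_dominated_convergence
      (fun x => Real.exp (-x) * x ^ (-β) * M) ?_ ?_ ?_ ?_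
    · filter_upwards [self_mem_nhdsWithin] with s hs
      have f1 : ContinuousOn (fun x : ℝ => Real.exp (-x) * x ^ (-β)) (Set.Ioi 0) :=
        (Real.continuous_exp.comp continuous_neg).continuousOn.mul
          (ContinuousOn.rpow_const continuousOn_id (fun x hx => Or.inl (ne_of_gt hx)))
      have f2 : ContinuousOn (fun x : ℝ => (x / s) ^ β) (Set.Ioi 0) :=
        ContinuousOn.rpow_const (continuousOn_id.div_const s) (fun x _ => Or.inr hβ0.le)
      exact (f1.aestronglyMeasurable measurableSet_Ioi).mul
        ((f2.aestronglyMeasurable measurableSet_Ioi).mul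
          ((hmG.comp (measurable_id.div_const s)).aestronglyMeasurable))
    · filter_upwards [self_mem_nhdsWithin] with s hs
      refine (ae_restrict_iff' measurableSet_Ioi).2 (Eventually.of_forall fun x hx => ?_)
      have hx0 : (0:ℝ) < x := hx
      have hxs : (0:ℝ) ≤ x / s := div_nonneg hx0.le (le_of_lt hs)
      have hnn : 0 ≤ Real.exp (-x) * x ^ (-β) * ((x / s) ^ β * G (x / s)) := by
        have := hG0 (x / s)
        positivity
      rw [Real.norm_eq_abs, abs_of_nonneg hnn]
      have hb := hM (x / s) hxs
      have h0 : 0 ≤ Real.exp (-x) * x ^ (-β) := by positivity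
      exact mul_le_mul_of_nonneg_left hb h0
    · have hconv := Real.GammaIntegral_convergent (by linarith : (0:ℝ) < 1 - β)
      have : (fun x : ℝ => Real.exp (-x) * x ^ (1 - β - 1)) = fun x => Real.exp (-x) * x ^ (-β) := by
        funext x; norm_num
      rw [this] at hconv
      exact hconv.mul_const M
    · refine (ae_restrict_iff' measurableSet_Ioi).2 (Eventually.of_forall fun x hx => ?_)
      have hx0 : (0:ℝ) < x := hx
      have hdiv : Tendsto (fun s : ℝ => x / s) (𝓝[>] (0:ℝ)) atTop := by
        simp_rw [div_eq_mul_inv]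
        exact Tendsto.const_mul_atTop hx0 tendsto_inv_nhdsGT_zero
      have := htail.comp hdiv
      exact Tendsto.const_mul _ this
  -- Step 4: compute the constant
  have hconst : (∫ x in Set.Ioi (0:ℝ), Real.exp (-x) * x ^ (-β) * (c / β))
      = c * π / (Real.Gamma (β + 1) * Real.sin (β * π)) := by
    rw [integral_mul_const]
    have hΓ : (∫ x in Set.Ioi (0:ℝ), Real.exp (-x) * x ^ (-β)) = Real.Gamma (1 - β) := by
      rw [Real.Gamma_eq_integral (by linarith : (0:ℝ) < 1 - β)]
      norm_num
    rw [hΓ, Real.Gamma_add_one hβ0.ne']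
    have hrefl := Real.Gamma_mul_Gamma_one_sub β
    rw [mul_comm π β] at hrefl
    have hsin : 0 < Real.sin (β * π) :=
      Real.sin_pos_of_pos_of_lt_pi (by positivity) (by nlinarith [Real.pi_pos])
    have hΓβ : 0 < Real.Gamma β := Real.Gamma_pos_of_pos hβ0
    have hπ : Real.Gamma β * Real.Gamma (1 - β) * Real.sin (β * π) = π := by
      rw [hrefl]
      exact div_mul_cancel₀ π hsin.ne'
    field_simp
    linear_combination hπ
  rw [hconst] at hlim
  refine hlim.congr' ?_
  filter_upwards [self_mem_nhdsWithin] with s hs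
  exact (key2 s hs).symm
end

section
/- Asymptotic universality of the Mittag-Leffler waiting time (thinning/respeeding limit): Let ν be a probability measure on [0,∞) with Laplace transform f̃(s) = ∫ e^{-st} dν(t), let 0 < β ≤ 1 and λ > 0, and assume lim_{s→0+} (1 - f̃(s))/s^β = λ. Fix s > 0. Then, under the scaling relation q = λ τ^β, the Laplace transform of the thinned and rescaled waiting time density converges to that of the Mittag-Leffler density: lim_{τ→0+} [ λ τ^β f̃(τ s) ] / [ 1 - (1 - λ τ^β) f̃(τ s) ] = 1 / (1 + s^β). -/
open MeasureTheory Real Filter Set Topology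

theorem thinning_limit_mittagLeffler
    (ν : Measure ℝ) [IsProbabilityMeasure ν]
    (hsupp : ν (Set.Iio 0) = 0)
    (β lam : ℝ) (hβ0 : 0 < β) (hβ1 : β ≤ 1) (hlam : 0 < lam)
    (hasymp : Tendsto (fun s : ℝ => (1 - ∫ t, Real.exp (-(s * t)) ∂ν) / s ^ β)
      (𝓝[>] (0:ℝ)) (𝓝 lam))
    (s : ℝ) (hs : 0 < s) :
    Tendsto (fun τ : ℝ =>
        (lam * τ ^ β * ∫ t, Real.exp (-(τ * s * t)) ∂ν) /
          (1 - (1 - lam * τ ^ β) * ∫ t, Real.exp (-(τ * s * t)) ∂ν))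
      (𝓝[>] (0:ℝ)) (𝓝 (1 / (1 + s ^ β))) := by
  set F : ℝ → ℝ := fun σ => ∫ t, Real.exp (-(σ * t)) ∂ν with hF
  -- τ ↦ τ * s maps 𝓝[>]0 to 𝓝[>]0
  have hmap : Tendsto (fun τ : ℝ => τ * s) (𝓝[>] (0:ℝ)) (𝓝[>] (0:ℝ)) := by
    apply tendsto_nhdsWithin_of_tendsto_nhds_of_eventually_within
    · have : Tendsto (fun τ : ℝ => τ * s) (𝓝 (0:ℝ)) (𝓝 (0 * s)) :=
        (continuous_id.mul continuous_const).tendsto 0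
      simpa using this.mono_left nhdsWithin_le_nhds
    · filter_upwards [self_mem_nhdsWithin] with τ hτ
      exact mul_pos hτ hs
  -- σ^β → 0 as σ → 0+
  have hpow : Tendsto (fun σ : ℝ => σ ^ β) (𝓝[>] (0:ℝ)) (𝓝 0) := by
    have h := (Real.continuousAt_rpow_const 0 β (Or.inr hβ0.le)).tendsto
    rw [Real.zero_rpow hβ0.ne'] at h
    exact h.mono_left nhdsWithin_le_nhds
  -- 1 - F σ → 0
  have h0 : Tendsto (fun σ : ℝ => 1 - F σ) (𝓝[>] (0:ℝ)) (𝓝 0) := by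
    have h := hasymp.mul hpow
    rw [mul_zero] at h
    refine h.congr' ?_
    filter_upwards [self_mem_nhdsWithin] with σ hσ
    have : (σ : ℝ) ^ β ≠ 0 := (Real.rpow_pos_of_pos hσ β).ne'
    field_simp
    rfl
  -- F (τ * s) → 1
  have hA : Tendsto (fun τ : ℝ => F (τ * s)) (𝓝[>] (0:ℝ)) (𝓝 1) := by
    have h := (tendsto_const_nhds (x := (1:ℝ)) (f := 𝓝[>] (0:ℝ))).sub (h0.comp hmap)
    rw [sub_zero] at h
    refine h.congr ?_
    intro τ; simp [Function.comp]
  -- (1 - F (τ * s)) / (lam * τ^β) → s^β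
  have hg : Tendsto (fun τ : ℝ => (1 - F (τ * s)) / (lam * τ ^ β)) (𝓝[>] (0:ℝ))
      (𝓝 (s ^ β)) := by
    have h := (hasymp.comp hmap).mul_const (s ^ β / lam)
    have hlim : lam * (s ^ β / lam) = s ^ β := by field_simp
    rw [hlim] at h
    refine h.congr' ?_
    filter_upwards [self_mem_nhdsWithin] with τ hτ
    have hτβ : (0:ℝ) < τ ^ β := Real.rpow_pos_of_pos hτ β
    have hsβ : (0:ℝ) < s ^ β := Real.rpow_pos_of_pos hs β
    have hmul : (τ * s) ^ β = τ ^ β * s ^ β := Real.mul_rpow hτ.le hs.le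
    simp only [Function.comp]
    rw [hmul]
    field_simp
    ring
  -- combine
  have hsβ : (0:ℝ) < s ^ β := Real.rpow_pos_of_pos hs β
  have hfin : Tendsto (fun τ : ℝ => F (τ * s) /
      ((1 - F (τ * s)) / (lam * τ ^ β) + F (τ * s))) (𝓝[>] (0:ℝ))
      (𝓝 (1 / (1 + s ^ β))) := by
    have hden : Tendsto (fun τ : ℝ => (1 - F (τ * s)) / (lam * τ ^ β) + F (τ * s))
        (𝓝[>] (0:ℝ)) (𝓝 (s ^ β + 1)) := hg.add hA
    have := hA.div hden (by positivity)
    rw [show (1:ℝ) / (1 + s ^ β) = 1 / (s ^ β + 1) by rw [add_comm]]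
    exact this
  refine hfin.congr' ?_
  filter_upwards [self_mem_nhdsWithin] with τ hτ
  have hc : lam * τ ^ β ≠ 0 := (mul_pos hlam (Real.rpow_pos_of_pos hτ β)).ne'
  set A := F (τ * s)
  set c := lam * τ ^ β
  have h1 : (1 - A) / c + A = (1 - (1 - c) * A) / c := by field_simp; ring
  have : τ * s = τ * s := rfl
  show A / ((1 - A) / c + A) = c * A / (1 - (1 - c) * A)
  rw [h1, div_div_eq_mul_div]
  ring
end

section
/- Self-similarity and invariance of the Mittag-Leffler waiting time law: let 0 < β ≤ 1 and write φ̃(s) = 1/(1+s^β) for s > 0. Then for all τ > 0, a > 0, and s > 0, the rescaled-and-respeeded transform satisfies a·φ̃(τs) / (1 - (1-a)·φ̃(τs)) = φ̃(τ s / a^{1/β}) = 1 / (1 + (τ s / a^{1/β})^β). In particular, choosing a = τ^β gives invariance: τ^β φ̃(τ s)/(1-(1-τ^β)φ̃(τ s)) = φ̃(s). -/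
open MeasureTheory Real Filter Set Topology

lemma aux_frac (x a : ℝ) (hx : 0 < x) (ha : 0 < a) :
    a * (1 / (1 + x)) / (1 - (1 - a) * (1 / (1 + x))) = 1 / (1 + x / a) := by
  have h1 : (1 : ℝ) + x ≠ 0 := by positivity
  have h2 : a + x ≠ 0 := by positivity
  field_simp
  ring_nf
  rw [← add_mul, mul_inv_cancel₀ h2]

theorem mittagLeffler_laplace_self_similarity
    (β : ℝ) (hβ0 : 0 < β) (hβ1 : β ≤ 1) :
    ∀ τ a s : ℝ, 0 < τ → 0 < a → 0 < s →
      (a * (1 / (1 + (τ * s) ^ β)) / (1 - (1 - a) * (1 / (1 + (τ * s) ^ β))) =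
          1 / (1 + (τ * s / a ^ (1 / β)) ^ β)) ∧
      (τ ^ β * (1 / (1 + (τ * s) ^ β)) / (1 - (1 - τ ^ β) * (1 / (1 + (τ * s) ^ β))) =
          1 / (1 + s ^ β)) := by
  intro τ a s hτ ha hs
  have hβ : β ≠ 0 := ne_of_gt hβ0
  have key : ∀ b : ℝ, 0 < b →
      b * (1 / (1 + (τ * s) ^ β)) / (1 - (1 - b) * (1 / (1 + (τ * s) ^ β))) =
        1 / (1 + (τ * s / b ^ (1 / β)) ^ β) := by
    intro b hb
    have hx : 0 < (τ * s) ^ β := rpow_pos_of_pos (by positivity) β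
    have hpow : (b ^ (1 / β)) ^ β = b := by
      rw [← Real.rpow_mul hb.le, one_div_mul_cancel hβ, rpow_one]
    have hrw : (τ * s / b ^ (1 / β)) ^ β = (τ * s) ^ β / b := by
      rw [Real.div_rpow (by positivity) (by positivity), hpow]
    rw [hrw, aux_frac _ _ hx hb]
  constructor
  · exact key a ha
  · have := key (τ ^ β) (rpow_pos_of_pos hτ β)
    rw [this]
    have hpow : (τ ^ β) ^ (1 / β) = τ := by
      rw [← Real.rpow_mul hτ.le, mul_one_div_cancel hβ, rpow_one]
    rw [hpow, mul_comm τ s, mul_div_assoc, div_self (ne_of_gt hτ), mul_one]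
end

section
/- Well-scaled diffusion limit of the Montroll-Weiss transform: let 0 < α ≤ 2, 0 < β ≤ 1, λ > 0, μ > 0. Let ν be a probability measure on [0,∞) with Laplace transform φ̃(s) = ∫ e^{-st} dν(t) satisfying lim_{s→0+}(1-φ̃(s))/s^β = λ, and let σ be a symmetric probability measure on ℝ with characteristic function ŵ(κ) = ∫ cos(κx) dσ(x) satisfying lim_{κ→0+}(1-ŵ(κ))/κ^α = μ. Fix s > 0 and κ ≠ 0, and for h > 0 set τ(h) = ((μ/λ) h^α)^{1/β} (the scaling relation μ h^α / (λ τ^β) = 1). Then the rescaled Montroll-Weiss transform converges: lim_{h→0+} [ (1 - φ̃(τ(h) s)) / s ] · [ 1 / (1 - ŵ(hκ) φ̃(τ(h) s)) ] = s^{β-1} / (|κ|^α + s^β). -/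
open MeasureTheory Real Filter Set Topology

private lemma mw_aux (p w s m : ℝ) (hm : m ≠ 0) (hs : s ≠ 0) :
    ((1 - p) / m) / s * (((1 - w) / m + w * ((1 - p) / m))⁻¹)
      = ((1 - p) / s) * (1 / (1 - w * p)) := by
  have hDe : (1 - w) / m + w * ((1 - p) / m) = (1 - w * p) / m := by
    field_simp
    ring
  rw [hDe]
  rcases eq_or_ne (1 - w * p) 0 with h0 | h0
  · simp [h0]
  · field_simp

theorem montroll_weiss_diffusion_limit
    (α β lam mu : ℝ) (hα0 : 0 < α) (hα2 : α ≤ 2) (hβ0 : 0 < β) (hβ1 : β ≤ 1)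
    (hlam : 0 < lam) (hmu : 0 < mu)
    (ν : Measure ℝ) [IsProbabilityMeasure ν] (hνsupp : ν (Set.Iio 0) = 0)
    (hνasymp : Tendsto (fun s : ℝ => (1 - ∫ t, Real.exp (-(s * t)) ∂ν) / s ^ β)
      (𝓝[>] (0:ℝ)) (𝓝 lam))
    (σ : Measure ℝ) [IsProbabilityMeasure σ] (hσsymm : σ.map (fun x => -x) = σ)
    (hσasymp : Tendsto (fun κ : ℝ => (1 - ∫ x, Real.cos (κ * x) ∂σ) / κ ^ α)
      (𝓝[>] (0:ℝ)) (𝓝 mu))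
    (s κ : ℝ) (hs : 0 < s) (hκ : κ ≠ 0) :
    Tendsto (fun h : ℝ =>
        ((1 - ∫ t, Real.exp (-((((mu / lam) * h ^ α) ^ (1 / β)) * s * t)) ∂ν) / s) *
          (1 / (1 - (∫ x, Real.cos (h * κ * x) ∂σ) *
            ∫ t, Real.exp (-((((mu / lam) * h ^ α) ^ (1 / β)) * s * t)) ∂ν)))
      (𝓝[>] (0:ℝ)) (𝓝 (s ^ (β - 1) / (|κ| ^ α + s ^ β))) := by
  have hβne : β ≠ 0 := ne_of_gt hβ0
  have hsβ : (0:ℝ) < s ^ β := Real.rpow_pos_of_pos hs β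
  have habs : (0:ℝ) < |κ| := abs_pos.mpr hκ
  have hκα : (0:ℝ) < |κ| ^ α := Real.rpow_pos_of_pos habs α
  have hml : (0:ℝ) < mu / lam := div_pos hmu hlam
  set φf : ℝ → ℝ := fun u => ∫ t, Real.exp (-(u * t)) ∂ν with hφf
  set wf : ℝ → ℝ := fun k => ∫ x, Real.cos (k * x) ∂σ with hwf
  set τ : ℝ → ℝ := fun h => ((mu / lam) * h ^ α) ^ (1 / β) with hτdef
  have hν' : Tendsto (fun u : ℝ => (1 - φf u) / u ^ β) (𝓝[>] (0:ℝ)) (𝓝 lam) := hνasymp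
  have hσ' : Tendsto (fun k : ℝ => (1 - wf k) / k ^ α) (𝓝[>] (0:ℝ)) (𝓝 mu) := hσasymp
  -- h ^ α → 0 from the right
  have hpow0 : Tendsto (fun h : ℝ => h ^ α) (𝓝[>] (0:ℝ)) (𝓝 0) := by
    have h1 : ContinuousAt (fun h : ℝ => h ^ α) 0 :=
      Real.continuousAt_rpow_const 0 α (Or.inr hα0.le)
    have h2 := h1.tendsto.mono_left (nhdsWithin_le_nhds (s := Ioi (0:ℝ)))
    simpa [Real.zero_rpow hα0.ne'] using h2
  have hm0 : Tendsto (fun h : ℝ => mu * h ^ α) (𝓝[>] (0:ℝ)) (𝓝 0) := by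
    simpa using hpow0.const_mul mu
  have hτ0 : Tendsto τ (𝓝[>] (0:ℝ)) (𝓝 0) := by
    have hin : Tendsto (fun h : ℝ => (mu / lam) * h ^ α) (𝓝[>] (0:ℝ)) (𝓝 0) := by
      simpa using hpow0.const_mul (mu / lam)
    have h1 : ContinuousAt (fun y : ℝ => y ^ (1 / β)) 0 :=
      Real.continuousAt_rpow_const 0 (1 / β) (Or.inr (by positivity))
    have h2 := h1.tendsto.comp hin
    rw [Real.zero_rpow (one_div_ne_zero hβne)] at h2
    exact h2
  have hτpos : ∀ h : ℝ, 0 < h → 0 < τ h := by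
    intro h hh
    have : (0:ℝ) < (mu / lam) * h ^ α := by
      have := Real.rpow_pos_of_pos hh α
      positivity
    exact Real.rpow_pos_of_pos this _
  have hu : Tendsto (fun h : ℝ => τ h * s) (𝓝[>] (0:ℝ)) (𝓝[>] (0:ℝ)) := by
    apply tendsto_nhdsWithin_of_tendsto_nhds_of_eventually_within
    · simpa only [zero_mul] using hτ0.mul_const s
    · filter_upwards [self_mem_nhdsWithin] with h hh
      exact mul_pos (hτpos h hh) hs
  have hv : Tendsto (fun h : ℝ => h * |κ|) (𝓝[>] (0:ℝ)) (𝓝[>] (0:ℝ)) := by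
    apply tendsto_nhdsWithin_of_tendsto_nhds_of_eventually_within
    · have := (tendsto_id (x := 𝓝[>] (0:ℝ))).mono_right nhdsWithin_le_nhds
      simpa using this.mul_const |κ|
    · filter_upwards [self_mem_nhdsWithin] with h hh
      exact mul_pos hh habs
  have hτβ : ∀ h : ℝ, 0 < h → (τ h * s) ^ β = (mu / lam) * h ^ α * s ^ β := by
    intro h hh
    have hhα : (0:ℝ) < h ^ α := Real.rpow_pos_of_pos hh α
    have hb : (0:ℝ) ≤ (mu / lam) * h ^ α := by positivity
    rw [Real.mul_rpow (Real.rpow_nonneg hb _) hs.le, ← Real.rpow_mul hb,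
      one_div, inv_mul_cancel₀ hβne, Real.rpow_one]
  -- C
  have hC : Tendsto (fun h : ℝ => (1 - φf (τ h * s)) / (mu * h ^ α)) (𝓝[>] (0:ℝ))
      (𝓝 (s ^ β)) := by
    have h1 := (hν'.comp hu).mul_const (s ^ β / lam)
    have h2 : lam * (s ^ β / lam) = s ^ β := by field_simp
    rw [h2] at h1
    refine h1.congr' ?_
    filter_upwards [self_mem_nhdsWithin] with h hh
    have hα' : (0:ℝ) < h ^ α := Real.rpow_pos_of_pos hh α
    simp only [Function.comp]
    rw [hτβ h hh]
    field_simp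
  -- evenness of wf
  have hwev : ∀ h : ℝ, wf (h * κ) = wf (h * |κ|) := by
    intro h
    rcases abs_choice κ with hc | hc
    · rw [hc]
    · rw [hc]
      show (∫ x, Real.cos (h * κ * x) ∂σ) = ∫ x, Real.cos (h * -κ * x) ∂σ
      refine integral_congr_ae (Eventually.of_forall fun x => ?_)
      show Real.cos (h * κ * x) = Real.cos (h * -κ * x)
      rw [show h * -κ * x = -(h * κ * x) by ring, Real.cos_neg]
  -- B
  have hB : Tendsto (fun h : ℝ => (1 - wf (h * κ)) / (mu * h ^ α)) (𝓝[>] (0:ℝ))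
      (𝓝 (|κ| ^ α)) := by
    have h1 := (hσ'.comp hv).mul_const (|κ| ^ α / mu)
    have h2 : mu * (|κ| ^ α / mu) = |κ| ^ α := by field_simp
    rw [h2] at h1
    refine h1.congr' ?_
    filter_upwards [self_mem_nhdsWithin] with h hh
    have hα' : (0:ℝ) < h ^ α := Real.rpow_pos_of_pos hh α
    simp only [Function.comp]
    rw [Real.mul_rpow hh.le habs.le, hwev h]
    field_simp
  -- wf → 1
  have hw1 : Tendsto (fun h : ℝ => wf (h * κ)) (𝓝[>] (0:ℝ)) (𝓝 1) := by
    have h1 := hB.mul hm0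
    rw [mul_zero] at h1
    have h2 := (tendsto_const_nhds (x := (1:ℝ)) (f := 𝓝[>] (0:ℝ))).sub h1
    rw [sub_zero] at h2
    refine h2.congr' ?_
    filter_upwards [self_mem_nhdsWithin] with h hh
    have hα' : (0:ℝ) < h ^ α := Real.rpow_pos_of_pos hh α
    have hmne : mu * h ^ α ≠ 0 := by positivity
    rw [div_mul_cancel₀ _ hmne]
    ring
  -- denominator limit
  have hD : Tendsto (fun h : ℝ => (1 - wf (h * κ)) / (mu * h ^ α)
      + wf (h * κ) * ((1 - φf (τ h * s)) / (mu * h ^ α))) (𝓝[>] (0:ℝ))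
      (𝓝 (|κ| ^ α + s ^ β)) := by
    have := hB.add (hw1.mul hC)
    simpa using this
  have hne : |κ| ^ α + s ^ β ≠ 0 := by positivity
  have hfin := (hC.div_const s).mul (hD.inv₀ hne)
  have hval : s ^ β / s * (|κ| ^ α + s ^ β)⁻¹ = s ^ (β - 1) / (|κ| ^ α + s ^ β) := by
    rw [Real.rpow_sub hs, Real.rpow_one, ← div_eq_mul_inv]
  rw [hval] at hfin
  refine Tendsto.congr' ?_ hfin
  filter_upwards [self_mem_nhdsWithin] with h hh
  have hα' : (0:ℝ) < h ^ α := Real.rpow_pos_of_pos hh α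
  have hmne : mu * h ^ α ≠ 0 := by positivity
  exact mw_aux (φf (τ h * s)) (wf (h * κ)) s (mu * h ^ α) hmne hs.ne'
end

section
/- For 0 < β ≤ 1, c > 0, and every real s with s^β > c (in particular for all sufficiently large s > 0), one has ∫₀^∞ e^{-st} E_β(-c t^β) dt = s^{β-1} / (c + s^β). -/
open MeasureTheory Real Filter Set Topology

theorem mittagLeffler_scaled_laplace_transform
    (β c s : ℝ) (hβ0 : 0 < β) (hβ1 : β ≤ 1) (hc : 0 < c) (hs0 : 0 < s) (hs : c < s ^ β) :
    ∫ t in Set.Ioi (0:ℝ), Real.exp (-(s * t)) * mittagLeffler β (-(c * t ^ β)) =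
      s ^ (β - 1) / (c + s ^ β) := by
  have hsb : (0:ℝ) < s ^ β := Real.rpow_pos_of_pos hs0 β
  have hGpos : ∀ n : ℕ, 0 < Real.Gamma (1 + β * n) := fun n =>
    Real.Gamma_pos_of_pos (by positivity)
  set F : ℕ → ℝ → ℝ := fun n t =>
    Real.exp (-(s * t)) * ((-(c * t ^ β)) ^ n / Real.Gamma (1 + β * n)) with hF
  -- pointwise forms on `Ioi 0`
  have hpow : ∀ (n : ℕ) (t : ℝ), 0 < t → (t ^ β) ^ n = t ^ (β * n) := by
    intro n t ht
    rw [← Real.rpow_natCast (t ^ β) n, ← Real.rpow_mul ht.le]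
  have hFeq : ∀ (n : ℕ) (t : ℝ), t ∈ Ioi (0:ℝ) →
      F n t = ((-c) ^ n / Real.Gamma (1 + β * n)) * (t ^ (β * n) * Real.exp (-(s * t))) := by
    intro n t ht
    have h1 : (-(c * t ^ β)) ^ n = (-c) ^ n * t ^ (β * n) := by
      rw [show -(c * t ^ β) = (-c) * t ^ β by ring, mul_pow, hpow n t ht]
    simp only [hF, h1]; ring
  have hFnorm : ∀ (n : ℕ) (t : ℝ), t ∈ Ioi (0:ℝ) →
      ‖F n t‖ = (c ^ n / Real.Gamma (1 + β * n)) * (t ^ (β * n) * Real.exp (-(s * t))) := by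
    intro n t ht
    have htp : (0:ℝ) < t ^ (β * n) := Real.rpow_pos_of_pos ht _
    rw [hFeq n t ht, Real.norm_eq_abs, abs_mul, abs_div, abs_pow, abs_neg, abs_of_pos hc,
      abs_of_pos (hGpos n), abs_of_pos (mul_pos htp (Real.exp_pos _))]
  -- integrability of the basic function
  have hint : ∀ n : ℕ, IntegrableOn (fun t : ℝ => t ^ (β * n) * Real.exp (-(s * t)))
      (Ioi 0) := by
    intro n
    have hb : (-1:ℝ) < β * n := by
      have : (0:ℝ) ≤ β * n := by positivity
      linarith
    have := integrableOn_rpow_mul_exp_neg_mul_rpow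
      (s := β * n) (p := 1) (b := s) hb one_pos hs0
    simpa [Real.rpow_one, neg_mul] using this
  -- the basic integral
  have hval : ∀ n : ℕ, ∫ t in Ioi (0:ℝ), t ^ (β * n) * Real.exp (-(s * t))
      = (1 / s) ^ (β * n + 1) * Real.Gamma (1 + β * n) := by
    intro n
    have := Real.integral_rpow_mul_exp_neg_mul_Ioi
      (a := β * n + 1) (r := s) (by positivity) hs0
    rw [add_comm (1:ℝ) (β * n)]
    simpa [add_sub_cancel_right] using this
  have hF_int : ∀ n : ℕ, Integrable (F n) (volume.restrict (Ioi 0)) := by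
    intro n
    exact MeasureTheory.IntegrableOn.congr_fun
      ((hint n).const_mul ((-c) ^ n / Real.Gamma (1 + β * n)))
      (fun t ht => (hFeq n t ht).symm) measurableSet_Ioi
  -- value of constant-multiple integrals
  have hIval : ∀ (d : ℝ) (n : ℕ),
      ∫ t in Ioi (0:ℝ), (d ^ n / Real.Gamma (1 + β * n)) * (t ^ (β * n) * Real.exp (-(s * t)))
        = d ^ n * (1 / s) ^ (β * n + 1) := by
    intro d n
    rw [MeasureTheory.integral_const_mul, hval n]
    field_simp
  have hpow2 : ∀ n : ℕ, ((1:ℝ) / s) ^ (β * n + 1) = ((s ^ β)⁻¹) ^ n * s⁻¹ := by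
    intro n
    have h0 : (0:ℝ) < s⁻¹ := by positivity
    rw [Real.rpow_add (by positivity), Real.rpow_one, one_div, ← hpow n s⁻¹ h0,
      Real.inv_rpow hs0.le]
  -- summability of the integrals of norms
  have hnormval : ∀ n : ℕ, ∫ t in Ioi (0:ℝ), ‖F n t‖ = (c * (s ^ β)⁻¹) ^ n * s⁻¹ := by
    intro n
    rw [setIntegral_congr_fun measurableSet_Ioi (hFnorm n), hIval c n, hpow2 n,
      mul_pow, mul_assoc]
  have hr1 : c * (s ^ β)⁻¹ < 1 := by
    rw [← div_eq_mul_inv, div_lt_one hsb]; exact hs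
  have hr0 : (0:ℝ) ≤ c * (s ^ β)⁻¹ := by positivity
  have hsum : Summable fun n : ℕ => ∫ t in Ioi (0:ℝ), ‖F n t‖ := by
    rw [funext hnormval]
    exact (summable_geometric_of_lt_one hr0 hr1).mul_right _
  -- main computation
  have key : ∫ t in Ioi (0:ℝ), ∑' n : ℕ, F n t = ∑' n : ℕ, ∫ t in Ioi (0:ℝ), F n t :=
    (MeasureTheory.integral_tsum_of_summable_integral_norm hF_int hsum).symm
  have hML : ∀ t : ℝ, Real.exp (-(s * t)) * mittagLeffler β (-(c * t ^ β)) = ∑' n : ℕ, F n t := by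
    intro t
    rw [mittagLeffler, ← tsum_mul_left]
  calc ∫ t in Set.Ioi (0:ℝ), Real.exp (-(s * t)) * mittagLeffler β (-(c * t ^ β))
      = ∫ t in Ioi (0:ℝ), ∑' n : ℕ, F n t := by simp_rw [hML]
    _ = ∑' n : ℕ, ∫ t in Ioi (0:ℝ), F n t := key
    _ = ∑' n : ℕ, (-(c * (s ^ β)⁻¹)) ^ n * s⁻¹ := by
        refine tsum_congr fun n => ?_
        rw [setIntegral_congr_fun measurableSet_Ioi (hFeq n), hIval (-c) n, hpow2 n,
          show (-(c * (s ^ β)⁻¹)) = (-c) * (s ^ β)⁻¹ by ring, mul_pow, mul_assoc]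
    _ = (1 - (-(c * (s ^ β)⁻¹)))⁻¹ * s⁻¹ := by
        rw [tsum_mul_right, tsum_geometric_of_norm_lt_one (by
          rw [norm_neg, Real.norm_eq_abs, abs_of_nonneg hr0]; exact hr1)]
    _ = s ^ (β - 1) / (c + s ^ β) := by
        rw [Real.rpow_sub hs0, Real.rpow_one]
        have h1 : c + s ^ β ≠ 0 := by positivity
        field_simp
        ring_nf
        first
        | rfl
        | rw [← add_mul, mul_inv_cancel₀ h1]
end
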